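/- arXiv:0803.1883 — 3 statements merged into one kernel-verified Lean document; each statement's English description precedes it below -/
import Mathlib

section
/- Let p > q be distinct odd primes and let G = A ⋊ Sym(q), where A = {(λ₁,...,λ_q) ∈ 𝔽_p^q : Σλᵢ = 0} with Sym(q) acting by permuting coordinates. Then A is the unique minimal normal subgroup of G. -/
open Equiv Multiplicative Polynomial

/-- Coordinate-permutation automorphism of the base group. -/
def permAut (p q : ℕ) (σ : Equiv.Perm (Fin q)) :
    MulAut (Fin q → Multiplicative (ZMod p)) where
  toFun v := v ∘ σ.symm
  invFun v := v ∘ σ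
  left_inv v := by funext i; simp
  right_inv v := by funext i; simp
  map_mul' v w := rfl

/-- The action of `Sym(q)` on the base group of the wreath product. -/
def wreathAct (p q : ℕ) :
    Equiv.Perm (Fin q) →* MulAut (Fin q → Multiplicative (ZMod p)) where
  toFun := permAut p q
  map_one' := rfl
  map_mul' σ τ := rfl

/-- The wreath product `C_p ≀ Sym(q)`. -/
abbrev Wreath (p q : ℕ) :=
  (Fin q → Multiplicative (ZMod p)) ⋊[wreathAct p q] Equiv.Perm (Fin q)

/-- The complex reflection group `G(p,p,q)` as a subgroup of `C_p ≀ Sym(q)`. -/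
def Gppq (p q : ℕ) : Subgroup (Wreath p q) where
  carrier := {g | ∑ i, Multiplicative.toAdd (g.left i) = 0}
  one_mem' := by simp
  mul_mem' := by
    intro a b ha hb
    simp only [Set.mem_setOf_eq, SemidirectProduct.mul_left] at *
    have : ∑ i, toAdd ((wreathAct p q a.right b.left) i) = 0 := by
      have := Equiv.sum_comp a.right.symm (fun i => toAdd (b.left i))
      exact this.trans hb
    simp [Pi.mul_apply, toAdd_mul, Finset.sum_add_distrib, ha, this]
  inv_mem' := by
    intro a ha
    simp only [Set.mem_setOf_eq, SemidirectProduct.inv_left] at *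
    have h := Equiv.sum_comp a.right (fun i => toAdd (a.left⁻¹ i))
    have h2 : ∑ i, toAdd (a.left⁻¹ i) = 0 := by
      simp [toAdd_inv, Finset.sum_neg_distrib, ha]
    simp only [wreathAct, permAut, map_inv]
    exact h.trans h2


/-- The base subgroup `A` inside `G(p,p,q)`. -/
def Abase (p q : ℕ) : Subgroup (Gppq p q) where
  carrier := {g | (g : Wreath p q).right = 1}
  one_mem' := rfl
  mul_mem' := by
    intro a b ha hb
    simp only [Set.mem_setOf_eq] at *
    simp [Subgroup.coe_mul, SemidirectProduct.mul_right, ha, hb]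
  inv_mem' := by
    intro a ha
    simp only [Set.mem_setOf_eq] at *
    simp [ha]

/-! A nontrivial normal subgroup `N` of `G(p,p,q)` meets the base `A` nontrivially: if `x ∈ N`
permutes coordinates by `σ ≠ 1`, its commutator with a base vector not fixed by `σ` (one exists
as `q ≥ 3`) is a nonzero base vector in `N`. The base vectors lying in `N` form a
`Sym(q)`-stable `𝔽_p`-subspace of the sum-zero hyperplane. As `p ∤ q`, a nonzero sum-zero
vector `v` is not constant; if `v i ≠ v j`, then `v ∘ (i j) - v` is a nonzero multiple of
`e_i - e_j`, and the permutes of `e_i - e_j` span the whole hyperplane, that is, `A`. -/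

section PermInvariant

variable {K ι : Type*}

lemma exists_apply_ne_of_sum_eq_zero [Semiring K] [NoZeroDivisors K] [Fintype ι]
    (hι : (Fintype.card ι : K) ≠ 0) {v : ι → K} (hsum : ∑ k, v k = 0) (hv : v ≠ 0) :
    ∃ i j, v i ≠ v j := by
  by_contra! hconst
  obtain ⟨i, hi⟩ : ∃ i, v i ≠ 0 := not_forall.mp fun h => hv (funext h)
  have : (Fintype.card ι : K) * v i = 0 := by
    simpa [fun k => hconst k i, Finset.sum_const, nsmul_eq_mul] using hsum
  exact (mul_ne_zero hι hi) this

variable [DecidableEq ι]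

lemma comp_swap_sub_self [Ring K] (v : ι → K) {i j : ι} (hij : i ≠ j) :
    v ∘ swap i j - v = (v j - v i) • (Pi.single i 1 - Pi.single j 1) := by
  funext k
  rcases eq_or_ne k i with rfl | hki
  · simp [hij]
  rcases eq_or_ne k j with rfl | hkj
  · simp [hij.symm]
  · simp [swap_apply_of_ne_of_ne hki hkj, hki, hkj]

variable [Fintype ι]

lemma exists_sum_eq_zero_comp_ne [AddCommGroup K] [One K] [NeZero (1 : K)]
    (hι : 3 ≤ Fintype.card ι) {σ : Perm ι} (hσ : σ ≠ 1) :
    ∃ w : ι → K, ∑ k, w k = 0 ∧ w ∘ σ ≠ w := by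
  obtain ⟨i, hi⟩ : ∃ i, σ i ≠ i := not_forall.mp fun h => hσ (Equiv.ext h)
  obtain ⟨j, hji, hjσ⟩ : ∃ j, j ≠ i ∧ j ≠ σ i := by
    by_contra! h
    have : Finset.univ ⊆ {i, σ i} := fun k _ => by
      rcases eq_or_ne k i with rfl | hk
      · simp
      · simp [h k hk]
    have := (Finset.card_le_card this).trans Finset.card_le_two
    simp at this
    omega
  refine ⟨Pi.single i 1 - Pi.single j 1, by simp, fun h => ?_⟩
  have := congrFun h i
  simp [hi, hjσ.symm, hji.symm] at this

lemma eq_sum_smul_single_sub [Ring K] (i : ι) {w : ι → K} (hw : ∑ k, w k = 0) :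
    w = ∑ k, w k • (Pi.single k 1 - Pi.single i 1) := by
  simp only [smul_sub, Finset.sum_sub_distrib, ← Finset.sum_smul, hw, zero_smul, sub_zero]
  ext l
  simp [Finset.sum_apply, Pi.single_apply]

theorem mem_of_sum_eq_zero_of_comp_perm_mem [DivisionRing K] {W : Submodule K (ι → K)}
    (hW : ∀ σ : Perm ι, ∀ v ∈ W, v ∘ σ ∈ W) {v : ι → K} (hv : v ∈ W) {i j : ι}
    (hij : v i ≠ v j) {w : ι → K} (hw : ∑ k, w k = 0) : w ∈ W := by
  have hne : i ≠ j := fun h => hij (congrArg v h)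
  have hij_mem : Pi.single i 1 - Pi.single j 1 ∈ W := by
    have := W.smul_mem (v j - v i)⁻¹ (W.sub_mem (hW (swap i j) v hv) hv)
    rwa [comp_swap_sub_self v hne, smul_smul, inv_mul_cancel₀ (sub_ne_zero.mpr hij.symm),
      one_smul] at this
  have hki_mem (k : ι) : Pi.single k 1 - Pi.single i 1 ∈ W := by
    rcases eq_or_ne k i with rfl | hki
    · simp
    have := W.neg_mem (hW (swap j k) _ hij_mem)
    rwa [Pi.sub_comp, Pi.single_comp_equiv, Pi.single_comp_equiv, symm_swap,
      swap_apply_of_ne_of_ne hne hki.symm, swap_apply_left, neg_sub] at this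
  rw [eq_sum_smul_single_sub i hw]
  exact W.sum_mem fun k _ => W.smul_mem _ (hki_mem k)

end PermInvariant

open scoped commutatorElement

namespace SemidirectProduct

variable {N G : Type*} [CommGroup N] [Group G] {φ : G →* MulAut N}

lemma commutatorElement_inl (n : N) (x : N ⋊[φ] G) :
    ⁅(inl n : N ⋊[φ] G), x⁆ = inl (n * φ x.right n⁻¹) := by
  ext <;> simp [commutatorElement_def, mul_comm, mul_left_comm]

end SemidirectProduct

lemma Subgroup.Normal.conj_mem_map_subtype {G : Type*} [Group G] {K : Subgroup G}
    {N : Subgroup K} (hN : N.Normal) {g x : G} (hg : g ∈ K) (hx : x ∈ N.map K.subtype) :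
    g * x * g⁻¹ ∈ N.map K.subtype := by
  obtain ⟨y, hy, rfl⟩ := hx
  exact ⟨⟨g, hg⟩ * y * ⟨g, hg⟩⁻¹, hN.conj_mem y hy _, rfl⟩

@[simp]
lemma wreathAct_apply {p q : ℕ} (σ : Perm (Fin q)) (v : Fin q → Multiplicative (ZMod p)) :
    wreathAct p q σ v = v ∘ σ.symm := rfl

open SemidirectProduct

namespace Gppq

variable (p q) in
def baseHom : Multiplicative (Fin q → ZMod p) →* Wreath p q :=
  inl.comp (MulEquiv.funMultiplicative (Fin q) (ZMod p)).toMonoidHom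

variable {p q : ℕ}

@[simp]
lemma baseHom_apply (v : Multiplicative (Fin q → ZMod p)) :
    baseHom p q v = inl fun i => ofAdd (toAdd v i) := rfl

lemma baseHom_mem_iff {v : Fin q → ZMod p} :
    baseHom p q (ofAdd v) ∈ Gppq p q ↔ ∑ i, v i = 0 := by
  simp [Gppq]

lemma baseHom_toAdd_left {x : Wreath p q} (hx : x.right = 1) :
    baseHom p q (ofAdd fun i => toAdd (x.left i)) = x := by
  ext <;> simp [hx]

lemma Abase_eq_ker : Abase p q = (rightHom.comp (Gppq p q).subtype).ker := rfl

lemma Abase_ne_bot [Nontrivial (ZMod p)] (hq : 2 ≤ q) : Abase p q ≠ ⊥ := by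
  let i : Fin q := ⟨0, by omega⟩
  let j : Fin q := ⟨1, by omega⟩
  have hij : i ≠ j := by simp [i, j, Fin.ext_iff]
  let w : Fin q → ZMod p := Pi.single i 1 - Pi.single j 1
  have hwi : w i ≠ 0 := by simp [w, hij]
  rw [Subgroup.ne_bot_iff_exists_ne_one]
  refine ⟨⟨⟨baseHom p q (ofAdd w), baseHom_mem_iff.mpr (by simp [w])⟩, rfl⟩, fun h => hwi ?_⟩
  simpa using congrArg (fun g : Abase p q => toAdd (((g : Gppq p q) : Wreath p q).left i)) h

def baseVectors (N : Subgroup (Gppq p q)) : Submodule (ZMod p) (Fin q → ZMod p) :=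
  AddSubgroup.toZModSubmodule p <|
    (N.map (Gppq p q).subtype).toAddSubgroup.comap (MonoidHom.toAdditiveRight (baseHom p q))

lemma mem_baseVectors {N : Subgroup (Gppq p q)} {v : Fin q → ZMod p} :
    v ∈ baseVectors N ↔ baseHom p q (ofAdd v) ∈ N.map (Gppq p q).subtype := Iff.rfl

lemma sum_eq_zero_of_mem_baseVectors {N : Subgroup (Gppq p q)} {v : Fin q → ZMod p}
    (hv : v ∈ baseVectors N) : ∑ i, v i = 0 :=
  baseHom_mem_iff.mp (Subgroup.map_subtype_le N hv)

lemma comp_perm_mem_baseVectors {N : Subgroup (Gppq p q)} (hN : N.Normal) (σ : Perm (Fin q))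
    {v : Fin q → ZMod p} (hv : v ∈ baseVectors N) : v ∘ σ ∈ baseVectors N := by
  have hconj : baseHom p q (ofAdd (v ∘ σ)) = inr σ⁻¹ * baseHom p q (ofAdd v) * (inr σ⁻¹)⁻¹ := by
    rw [← map_inv, baseHom_apply, baseHom_apply, ← inl_aut]
    rfl
  rw [mem_baseVectors, hconj]
  exact hN.conj_mem_map_subtype (by simp [Gppq]) hv

lemma exists_ne_zero_mem_baseVectors [Nontrivial (ZMod p)] {N : Subgroup (Gppq p q)}
    (hN : N.Normal) (hN1 : N ≠ ⊥) (hq : 3 ≤ q) : ∃ v ≠ 0, v ∈ baseVectors N := by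
  obtain ⟨⟨x, hxG⟩, hxN, hx1⟩ := N.bot_or_exists_ne_one.resolve_left hN1
  have hxM : x ∈ N.map (Gppq p q).subtype := ⟨_, hxN, rfl⟩
  by_cases hr : x.right = 1
  · refine ⟨fun i => toAdd (x.left i), fun h => hx1 (Subtype.ext ?_), ?_⟩
    · change x = 1
      rw [← baseHom_toAdd_left hr, h, ofAdd_zero, map_one]
    · rwa [mem_baseVectors, baseHom_toAdd_left hr]
  obtain ⟨w, hw, hwσ⟩ := exists_sum_eq_zero_comp_ne (K := ZMod p) (by simpa using hq)
    (inv_ne_one.mpr hr)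
  refine ⟨w - w ∘ ⇑x.right⁻¹, sub_ne_zero.mpr hwσ.symm, ?_⟩
  have hcomm : baseHom p q (ofAdd (w - w ∘ ⇑x.right⁻¹)) = ⁅baseHom p q (ofAdd w), x⁆ := by
    rw [baseHom_apply, baseHom_apply, commutatorElement_inl]
    congr 1
    funext i
    simp [sub_eq_add_neg]
  rw [mem_baseVectors, hcomm, commutatorElement_def]
  exact mul_mem (hN.conj_mem_map_subtype (baseHom_mem_iff.mpr hw) hxM) (inv_mem hxM)

lemma Abase_le_of_forall_mem_baseVectors {N : Subgroup (Gppq p q)}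
    (h : ∀ w : Fin q → ZMod p, ∑ i, w i = 0 → w ∈ baseVectors N) : Abase p q ≤ N := by
  intro x hx
  have := h (fun i => toAdd ((x : Wreath p q).left i)) x.2
  rw [mem_baseVectors, baseHom_toAdd_left hx] at this
  exact (Subgroup.mem_map_iff_mem (Gppq p q).subtype_injective).mp this

end Gppq

theorem stmt6_general (p q : ℕ) (hp : p.Prime) (hq : q.Prime)
    (hoq : Odd q) (hlt : q < p) :
    (Abase p q).Normal ∧ Abase p q ≠ ⊥ ∧
      ∀ N : Subgroup (Gppq p q), N.Normal → N ≠ ⊥ → Abase p q ≤ N := by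
  have : Fact p.Prime := ⟨hp⟩
  have hq3 : 3 ≤ q := by
    have := hq.two_le
    obtain ⟨k, rfl⟩ := hoq
    omega
  have hqp : (q : ZMod p) ≠ 0 := by
    rw [Ne, ZMod.natCast_eq_zero_iff]
    exact Nat.not_dvd_of_pos_of_lt hq.pos hlt
  refine ⟨by rw [Gppq.Abase_eq_ker]; infer_instance, Gppq.Abase_ne_bot (by omega),
    fun N hN hN1 => ?_⟩
  obtain ⟨v, hv0, hv⟩ := Gppq.exists_ne_zero_mem_baseVectors hN hN1 hq3
  obtain ⟨i, j, hij⟩ := exists_apply_ne_of_sum_eq_zero (by simpa using hqp)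
    (Gppq.sum_eq_zero_of_mem_baseVectors hv) hv0
  exact Gppq.Abase_le_of_forall_mem_baseVectors fun w hw =>
    mem_of_sum_eq_zero_of_comp_perm_mem (fun σ _ => Gppq.comp_perm_mem_baseVectors hN σ) hv hij hw

theorem stmt6 (p q : ℕ) (hp : p.Prime) (hq : q.Prime) (hop : Odd p)
    (hoq : Odd q) (hlt : q < p) :
    (Abase p q).Normal ∧ Abase p q ≠ ⊥ ∧
      ∀ N : Subgroup (Gppq p q), N.Normal → N ≠ ⊥ → Abase p q ≤ N :=
  stmt6_general p q hp hq hoq hlt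
end

section
/- Let p and q be distinct odd primes, let ζ be a primitive q-th root of unity in an extension of 𝔽_p, and consider the vector f̃ = (ζ^{q−1}, ζ^{q−2}, ..., ζ, 1). If a permutation σ ∈ Sym(q) acting by permuting coordinates maps f̃ to a scalar multiple of itself, then σ is a power of the q-cycle (1 2 ... q). -/
open Equiv Multiplicative Polynomial
open Fin.NatCast

/-!
The coordinate of `f̃` at `i` is `ζ ^ (rev i)`. Comparing last coordinates gives `c = ζ ^ k` with
`k = rev (σ⁻¹ (last))`; since `i ↦ ζ ^ i` is injective on `Fin q` and turns addition mod `q` into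
multiplication, every other coordinate then says `rev i = k + rev (σ i)`, i.e. `σ i = i + k`,
so `σ` is the `k`-th power of the rotation.
-/

lemma finRotate_pow_apply (n k : ℕ) (i : Fin (n + 1)) :
    (finRotate (n + 1) ^ k) i = i + k := by
  induction k with
  | zero => simp
  | succ k ih => rw [pow_succ', Perm.mul_apply, ih, finRotate_apply, Nat.cast_succ, add_assoc]

lemma mem_zpowers_finRotate_of_forall_apply_eq_add {n : ℕ} (σ : Perm (Fin (n + 1)))
    (k : Fin (n + 1)) (h : ∀ i, σ i = i + k) : σ ∈ Subgroup.zpowers (finRotate (n + 1)) := by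
  have hσ : σ = finRotate (n + 1) ^ k.val :=
    Equiv.ext fun i ↦ by rw [finRotate_pow_apply, Fin.cast_val_eq_self, h]
  exact hσ ▸ Subgroup.npow_mem_zpowers _ _

section orderOf

variable {M : Type*} [Monoid M] {ζ : M} {n : ℕ}

lemma pow_val_add_of_orderOf_eq [NeZero n] (hζ : orderOf ζ = n) (i j : Fin n) :
    ζ ^ (i + j).val = ζ ^ i.val * ζ ^ j.val := by
  subst hζ
  rw [Fin.val_add, pow_mod_orderOf, pow_add]

lemma pow_val_injective_of_orderOf_eq (hζ : orderOf ζ = n) :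
    Function.Injective fun i : Fin n ↦ ζ ^ i.val := fun i j hij ↦
  Fin.ext <| pow_injOn_Iio_orderOf (by simp [hζ]) (by simp [hζ]) hij

end orderOf

theorem mem_zpowers_finRotate_of_pow_rev_eq_mul {M : Type*} [Monoid M] {ζ : M} {n : ℕ}
    (hζ : orderOf ζ = n + 1) (σ : Perm (Fin (n + 1))) (c : M)
    (h : ∀ i, ζ ^ (σ.symm i).rev.val = c * ζ ^ i.rev.val) :
    σ ∈ Subgroup.zpowers (finRotate (n + 1)) := by
  set k := (σ.symm (Fin.last n)).rev
  have hc : c = ζ ^ k.val := by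
    simpa only [Fin.rev_last, Fin.val_zero, pow_zero, mul_one] using (h (Fin.last n)).symm
  refine mem_zpowers_finRotate_of_forall_apply_eq_add σ k fun i ↦ ?_
  have hrev : i.rev = k + (σ i).rev := by
    apply pow_val_injective_of_orderOf_eq hζ
    simpa only [pow_val_add_of_orderOf_eq hζ, ← hc, symm_apply_apply] using h (σ i)
  rw [← Fin.last_sub, ← Fin.last_sub] at hrev
  calc σ i = i + (Fin.last n - i - (Fin.last n - σ i)) := by abel
    _ = i + k := by rw [hrev, add_sub_cancel_right]

theorem stmt7_general (q : ℕ) (hq : q.Prime) (K : Type) [Field K]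
    (ζ : K) (hζ : orderOf ζ = q) (σ : Equiv.Perm (Fin q)) (c : K)
    (hσ : ∀ i : Fin q, ζ ^ (q - 1 - ((σ.symm i : Fin q) : ℕ)) =
      c * ζ ^ (q - 1 - (i : ℕ))) :
    σ ∈ Subgroup.zpowers (finRotate q) := by
  obtain ⟨n, rfl⟩ : ∃ n, q = n + 1 := Nat.exists_eq_add_one.mpr hq.pos
  have hrev : ∀ j : Fin (n + 1), j.rev.val = n + 1 - 1 - j.val := fun j ↦ by
    rw [Fin.val_rev]; omega
  exact mem_zpowers_finRotate_of_pow_rev_eq_mul hζ σ c fun i ↦ by simpa only [hrev] using hσ i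

theorem stmt7 (p q : ℕ) (hp : p.Prime) (hq : q.Prime) (hop : Odd p)
    (hoq : Odd q) (hpq : p ≠ q) (K : Type) [Field K] [Algebra (ZMod p) K]
    (ζ : K) (hζ : orderOf ζ = q) (σ : Equiv.Perm (Fin q)) (c : K)
    (hσ : ∀ i : Fin q, ζ ^ (q - 1 - ((σ.symm i : Fin q) : ℕ)) =
      c * ζ ^ (q - 1 - (i : ℕ))) :
    σ ∈ Subgroup.zpowers (finRotate q) :=
  stmt7_general q hq K ζ hζ σ c hσ
end

section
/- Let p < q be odd primes and H = A ⋊ ⟨b⟩ as above (|H| = p^{q−1}q). If K is a proper subgroup of H whose order is divisible by q, then either K is cyclic of order q, or K = core(K) ⋊ ⟨x⟩ for some element x of order q, where core(K) is the normal core of K in H and is the unique Sylow p-subgroup of K. -/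
open Equiv Multiplicative Polynomial

/-- The subgroup `H = A ⋊ ⟨b⟩` of the wreath product, where `b` is the cyclic
shift `(1 2 … q)`. -/
def Hgrp (p q : ℕ) : Subgroup (Wreath p q) where
  carrier := {g | ∑ i, Multiplicative.toAdd (g.left i) = 0 ∧
    g.right ∈ Subgroup.zpowers (finRotate q)}
  one_mem' := ⟨(Gppq p q).one_mem, Subgroup.one_mem _⟩
  mul_mem' := by
    intro a b ha hb
    exact ⟨(Gppq p q).mul_mem ha.1 hb.1, by
      simpa using Subgroup.mul_mem _ ha.2 hb.2⟩
  inv_mem' := by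
    intro a ha
    exact ⟨(Gppq p q).inv_mem ha.1, by simpa using Subgroup.inv_mem _ ha.2⟩


/-!
Let `A` be the kernel of the projection `H → ⟨b⟩`: an elementary abelian `p`-group with
`g ^ q ∈ A` for all `g`. Every `g ∉ A` generates `H` modulo `A` and centralizes no nontrivial
element of `A`: a vector fixed by the cyclic shift is constant, and a constant vector with
coordinate sum `0` vanishes because `p ∤ q`. So `a ↦ [a, g]` is a bijection of `A`, and a normal
subgroup containing some `g ∉ A` contains `A`, hence all of `H`; thus `core(K) ≤ A` when `K ≠ H`.
Conversely `A ⊓ K` is normal in `H = A K` because `A` is abelian, so `core(K) = A ⊓ K`. With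
`x ∈ K` of order `q` (Cauchy), `K = (A ⊓ K) ⟨x⟩`, and `A ⊓ K` is the Sylow `p`-subgroup of `K`.
-/

open SemidirectProduct Subgroup

open scoped Pointwise

namespace Subgroup

variable {G : Type*} [Group G] {A K : Subgroup G}

theorem normal_inf_of_sup_eq_top [hA : A.Normal] [IsMulCommutative A] (hAK : A ⊔ K = ⊤) :
    (A ⊓ K).Normal where
  conj_mem n hn g := by
    obtain ⟨a, ha, k, hk, rfl⟩ : g ∈ (A : Set G) * K := by
      rw [← normal_mul, hAK]; trivial
    have hkn : k * n * k⁻¹ ∈ A ⊓ K :=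
      ⟨hA.conj_mem n hn.1 k, K.mul_mem (K.mul_mem hk hn.2) (K.inv_mem hk)⟩
    have hcomm : a * (k * n * k⁻¹) = (k * n * k⁻¹) * a := setLike_mul_comm ha hkn.1
    have hconj : a * k * n * (a * k)⁻¹ = k * n * k⁻¹ := by
      rw [show a * k * n * (a * k)⁻¹ = a * (k * n * k⁻¹) * a⁻¹ by group, hcomm,
        mul_inv_cancel_right]
    rwa [hconj]

theorem le_of_fixedPointFree_conj [A.Normal] [Finite A] {N : Subgroup G} [hN : N.Normal] {g : G}
    (hg : g ∈ N) (hfree : ∀ a ∈ A, Commute g a → a = 1) : A ≤ N := by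
  intro a ha
  have hφ : MonoidHom.FixedPointFree (MulAut.conjNormal g : MulAut A) := fun b hb =>
    Subtype.ext <| hfree b b.2 <| by
      have := congrArg Subtype.val hb
      rw [MulAut.conjNormal_apply] at this
      exact mul_inv_eq_iff_eq_mul.1 this
  obtain ⟨b, hb⟩ := hφ.commutatorMap_surjective ⟨a, ha⟩
  have hab : a = b * g * (b : G)⁻¹ * g⁻¹ := by
    have := congrArg Subtype.val hb
    simp only [MonoidHom.commutatorMap_apply, coe_div, MulAut.conjNormal_apply] at this
    rw [← this, div_eq_mul_inv]
    group
  rw [hab]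
  exact N.mul_mem (hN.conj_mem g hg b) (N.inv_mem hg)

theorem normalCore_le_of_fixedPointFree [A.Normal] [Finite A]
    (hgen : ∀ g ∉ A, A ⊔ zpowers g = ⊤) (hfree : ∀ g ∉ A, ∀ a ∈ A, Commute g a → a = 1)
    (hK : K ≠ ⊤) : K.normalCore ≤ A := by
  intro g hg
  by_contra hgA
  apply hK
  rw [eq_top_iff, ← hgen g hgA]
  exact sup_le ((le_of_fixedPointFree_conj hg (hfree g hgA)).trans K.normalCore_le)
    (zpowers_le.2 (K.normalCore_le hg))

theorem normalCore_eq_inf_of_fixedPointFree [A.Normal] [IsMulCommutative A] [Finite A]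
    (hgen : ∀ g ∉ A, A ⊔ zpowers g = ⊤) (hfree : ∀ g ∉ A, ∀ a ∈ A, Commute g a → a = 1)
    (hK : K ≠ ⊤) {x : G} (hxK : x ∈ K) (hxA : x ∉ A) : K.normalCore = A ⊓ K := by
  have hAK : A ⊔ K = ⊤ := top_le_iff.1 (hgen x hxA ▸ sup_le_sup_left (zpowers_le.2 hxK) A)
  have := normal_inf_of_sup_eq_top hAK
  exact le_antisymm (le_inf (normalCore_le_of_fixedPointFree hgen hfree hK) K.normalCore_le)
    (normal_le_normalCore.2 inf_le_right)

theorem inf_sup_eq_of_sup_eq_top [A.Normal] {Z : Subgroup G} (hZK : Z ≤ K) (hAZ : A ⊔ Z = ⊤) :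
    A ⊓ K ⊔ Z = K := by
  refine le_antisymm (sup_le inf_le_right hZK) fun k hk => ?_
  obtain ⟨a, ha, z, hz, rfl⟩ : k ∈ (A : Set G) * Z := by
    rw [← normal_mul, hAZ]; trivial
  exact mul_mem_sup ⟨ha, by simpa using K.mul_mem hk (K.inv_mem (hZK hz))⟩ hz

theorem map_subtype_sylow_eq_inf {p q : ℕ} [Fact p.Prime] (hpq : p.Coprime q)
    (hA : IsPGroup p A) (hpow : ∀ g : G, g ^ q ∈ A) (P : Sylow p K) :
    (P : Subgroup K).map K.subtype = A ⊓ K := by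
  have hPA : (P : Subgroup K) ≤ A.subgroupOf K := fun z hz => by
    have hco : q.Coprime (orderOf (z : G)) := by
      rw [Subgroup.orderOf_coe, ← Subgroup.orderOf_mk z hz]
      exact (P.isPGroup'.orderOf_coprime hpq _).symm
    obtain ⟨m, hm⟩ := exists_pow_eq_self_of_coprime hco
    rw [mem_subgroupOf, ← hm]
    exact A.pow_mem (hpow _) m
  rw [← P.is_maximal' hA.comap_subtype hPA]
  exact subgroupOf_map_subtype A K

end Subgroup

theorem orderOf_finRotate {q : ℕ} (hq : 2 ≤ q) : orderOf (finRotate q) = q := by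
  rw [(isCycle_finRotate_of_le hq).orderOf, support_finRotate_of_le hq, Finset.card_univ,
    Fintype.card_fin]

theorem ZMod.eq_zero_of_forall_eq_of_sum_eq_zero {p q : ℕ} [Fact p.Prime] (hpq : ¬p ∣ q)
    {v : Fin q → ZMod p} (hv : ∀ i j, v i = v j) (hsum : ∑ i, v i = 0) : v = 0 := by
  funext i
  have hq : (q : ZMod p) ≠ 0 := by rwa [Ne, ZMod.natCast_eq_zero_iff]
  rw [Finset.sum_congr rfl fun j _ => hv j i, Finset.sum_const, Finset.card_univ,
    Fintype.card_fin, nsmul_eq_mul] at hsum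
  exact (mul_eq_zero.1 hsum).resolve_left hq

namespace Wreath

variable {p q : ℕ}

instance [NeZero p] : Finite (Wreath p q) := Finite.of_equiv _ equivProd.symm

theorem conj_inl (g : Wreath p q) (u : Fin q → Multiplicative (ZMod p)) :
    g * inl u * g⁻¹ = inl (wreathAct p q g.right u) :=
  calc g * inl u * g⁻¹
      = inl g.left * (inr g.right * inl u * inr g.right⁻¹) * (inl g.left)⁻¹ := by
        conv_lhs => rw [← inl_left_mul_inr_right g]
        rw [map_inv]
        group
    _ = inl (g.left * wreathAct p q g.right u * g.left⁻¹) := by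
        rw [← inl_aut, map_mul, map_mul, map_inv]
    _ = inl (wreathAct p q g.right u) := by rw [mul_inv_cancel_comm]

theorem wreathAct_eq_of_commute {g : Wreath p q} {u : Fin q → Multiplicative (ZMod p)}
    (h : Commute g (inl u)) : wreathAct p q g.right u = u :=
  inl_injective <| by rw [← conj_inl, h.eq, mul_inv_cancel_right]

end Wreath

namespace Hgrp

variable {p q : ℕ}

def toPerm (p q : ℕ) : Hgrp p q →* Perm (Fin q) :=
  rightHom.comp (Hgrp p q).subtype

theorem toPerm_mem_zpowers (g : Hgrp p q) : toPerm p q g ∈ zpowers (finRotate q) := g.2.2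

theorem eq_inl_of_mem_ker {a : Hgrp p q} (ha : a ∈ (toPerm p q).ker) :
    (a : Wreath p q) = inl (a : Wreath p q).left := by
  conv_lhs => rw [← inl_left_mul_inr_right (a : Wreath p q)]
  rw [show (a : Wreath p q).right = 1 from ha, map_one, mul_one]

instance : IsMulCommutative (toPerm p q).ker :=
  ⟨⟨fun a b => Subtype.ext <| Subtype.ext <| by
    simp only [Subgroup.coe_mul]
    rw [eq_inl_of_mem_ker a.2, eq_inl_of_mem_ker b.2, ← map_mul, ← map_mul, mul_comm]⟩⟩

theorem pow_eq_one_of_mem_ker {a : Hgrp p q} (ha : a ∈ (toPerm p q).ker) : a ^ p = 1 := by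
  have hu : (a : Wreath p q).left ^ p = 1 :=
    funext fun i => Multiplicative.toAdd.injective (by simp)
  refine Subtype.ext ?_
  rw [Subgroup.coe_pow, eq_inl_of_mem_ker ha, ← map_pow, hu, map_one, OneMemClass.coe_one]

theorem isPGroup_ker : IsPGroup p (toPerm p q).ker := fun a =>
  ⟨1, Subtype.ext (by rw [pow_one]; exact pow_eq_one_of_mem_ker a.2)⟩

theorem pow_mem_ker (hq : 2 ≤ q) (g : Hgrp p q) : g ^ q ∈ (toPerm p q).ker := by
  rw [MonoidHom.mem_ker, map_pow, ← orderOf_dvd_iff_pow_eq_one]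
  exact (orderOf_dvd_of_mem_zpowers (toPerm_mem_zpowers g)).trans
    (dvd_of_eq (orderOf_finRotate hq))

theorem zpowers_toPerm (hq : q.Prime) {g : Hgrp p q} (hg : g ∉ (toPerm p q).ker) :
    zpowers (toPerm p q g) = zpowers (finRotate q) := by
  have hdvd := orderOf_dvd_of_mem_zpowers (toPerm_mem_zpowers g)
  rw [orderOf_finRotate hq.two_le] at hdvd
  have hord : orderOf (toPerm p q g) = q :=
    (hq.eq_one_or_self_of_dvd _ hdvd).resolve_left fun h => hg (orderOf_eq_one_iff.1 h)
  refine eq_of_le_of_card_ge (zpowers_le.2 (toPerm_mem_zpowers g)) ?_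
  rw [Nat.card_zpowers, Nat.card_zpowers, hord, orderOf_finRotate hq.two_le]

theorem ker_sup_zpowers (hq : q.Prime) {g : Hgrp p q} (hg : g ∉ (toPerm p q).ker) :
    (toPerm p q).ker ⊔ zpowers g = ⊤ := by
  rw [sup_comm, ← comap_map_eq, MonoidHom.map_zpowers, zpowers_toPerm hq hg, eq_top_iff]
  exact fun h _ => toPerm_mem_zpowers h

theorem eq_one_of_commute (hp : p.Prime) (hq : q.Prime) (hpq : p ≠ q) {g a : Hgrp p q}
    (hg : g ∉ (toPerm p q).ker) (ha : a ∈ (toPerm p q).ker) (hga : Commute g a) : a = 1 := by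
  have := Fact.mk hp
  obtain ⟨u, hu⟩ : ∃ u, (a : Wreath p q) = inl u := ⟨_, eq_inl_of_mem_ker ha⟩
  have hinv : ∀ τ ∈ zpowers (finRotate q), wreathAct p q τ u = u := by
    rw [← zpowers_toPerm hq hg]
    rintro _ ⟨n, rfl⟩
    have h : Commute ((g ^ n : Hgrp p q) : Wreath p q) (inl u) :=
      hu ▸ (hga.zpow_left n).map (Hgrp p q).subtype
    show wreathAct p q (toPerm p q g ^ n) u = u
    rw [← map_zpow]
    exact Wreath.wreathAct_eq_of_commute h
  have hconst : ∀ i j, toAdd (u i) = toAdd (u j) := by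
    intro i j
    have hmoved : ∀ k, finRotate q k ≠ k := fun k =>
      Perm.mem_support.1 (by simp [support_finRotate_of_le hq.two_le])
    obtain ⟨k, hk⟩ := (isCycle_finRotate_of_le hq.two_le).exists_pow_eq (hmoved j) (hmoved i)
    have := congrFun (hinv _ (pow_mem (mem_zpowers _) k)) i
    rw [← this, ← hk]
    exact congrArg toAdd (congrArg u ((finRotate q ^ k).symm_apply_apply j))
  have hsum : ∑ i, toAdd (u i) = 0 := by simpa [hu] using a.2.1
  have hpq' : ¬p ∣ q := fun h => hpq ((Nat.prime_dvd_prime_iff_eq hp hq).1 h)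
  have hu1 : u = 1 := funext fun i => toAdd.injective <|
    congrFun (ZMod.eq_zero_of_forall_eq_of_sum_eq_zero hpq' hconst hsum) i
  exact Subtype.ext (by rw [hu, hu1, map_one, OneMemClass.coe_one])

end Hgrp

theorem stmt12_general (p q : ℕ) (hp : p.Prime) (hq : q.Prime)
    (hlt : p < q) (K : Subgroup ↥(Hgrp p q)) (hK : K ≠ ⊤)
    (hdvd : q ∣ Nat.card K) :
    (∃ x : ↥(Hgrp p q), orderOf x = q ∧ K = Subgroup.zpowers x) ∨
    ∃ x : ↥(Hgrp p q), x ∈ K ∧ orderOf x = q ∧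
      K.normalCore ⊔ Subgroup.zpowers x = K ∧
      K.normalCore ⊓ Subgroup.zpowers x = ⊥ ∧
      IsPGroup p K.normalCore ∧
      ∀ P : Sylow p ↥K, (P : Subgroup ↥K).map K.subtype = K.normalCore := by
  have := Fact.mk hp
  have := Fact.mk hq
  have := NeZero.of_pos hp.pos
  set A := (Hgrp.toPerm p q).ker
  have hgen : ∀ g ∉ A, A ⊔ zpowers g = ⊤ := fun _ => Hgrp.ker_sup_zpowers hq
  have hfree : ∀ g ∉ A, ∀ a ∈ A, Commute g a → a = 1 :=
    fun _ hg _ => Hgrp.eq_one_of_commute hp hq hlt.ne hg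
  obtain ⟨⟨x, hxK⟩, hx⟩ := exists_prime_orderOf_dvd_card' q hdvd
  rw [Subgroup.orderOf_mk] at hx
  have hxA : x ∉ A := fun hxA => hlt.ne' <| (Nat.prime_dvd_prime_iff_eq hq hp).1 <|
    hx ▸ orderOf_dvd_of_pow_eq_one (Hgrp.pow_eq_one_of_mem_ker hxA)
  have hcore := normalCore_eq_inf_of_fixedPointFree hgen hfree hK hxK hxA
  have hpgroup := Hgrp.isPGroup_ker.to_le (inf_le_left (b := K))
  -- the second alternative always holds; it covers the cyclic case with `core(K) = ⊥`
  refine Or.inr ⟨x, hxK, hx, ?_, ?_, ?_, fun P => ?_⟩ <;> rw [hcore]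
  · exact inf_sup_eq_of_sup_eq_top (zpowers_le.2 hxK) (hgen x hxA)
  · refine disjoint_iff.1 (IsPGroup.disjoint_of_ne p q hlt.ne _ _ hpgroup ?_)
    exact IsPGroup.of_card (n := 1) (by rw [Nat.card_zpowers, hx, pow_one])
  · exact hpgroup
  · exact map_subtype_sylow_eq_inf ((Nat.coprime_primes hp hq).2 hlt.ne) Hgrp.isPGroup_ker
      (Hgrp.pow_mem_ker hq.two_le) P

theorem stmt12 (p q : ℕ) (hp : p.Prime) (hq : q.Prime) (hop : Odd p)
    (hoq : Odd q) (hlt : p < q) (K : Subgroup ↥(Hgrp p q)) (hK : K ≠ ⊤)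
    (hdvd : q ∣ Nat.card K) :
    (∃ x : ↥(Hgrp p q), orderOf x = q ∧ K = Subgroup.zpowers x) ∨
    ∃ x : ↥(Hgrp p q), x ∈ K ∧ orderOf x = q ∧
      K.normalCore ⊔ Subgroup.zpowers x = K ∧
      K.normalCore ⊓ Subgroup.zpowers x = ⊥ ∧
      IsPGroup p K.normalCore ∧
      ∀ P : Sylow p ↥K, (P : Subgroup ↥K).map K.subtype = K.normalCore :=
  stmt12_general p q hp hq hlt K hK hdvd
end
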